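/- Let A be a commutative noetherian ring, M a finitely generated A-module, F a finitely generated free A-module, and φ: M → F an A-linear map. Then φ is versal if and only if for every finitely generated A-module P, the kernel of φ ⊗ id_P: M ⊗_A P → F ⊗_A P equals the kernel of the natural map α_{M,P}: M ⊗_A P → Hom_A(M*, P) determined by α_{M,P}(m ⊗ p)(λ) = λ(m) • p. -/
import Mathlib


open Module LinearMap

/-- A linear map `φ : M → F` is *versal* if every linear map from `M` into a finitely
generated free module factors through `φ`. -/
def IsVersal (A : Type) [CommRing A] {M F : Type} [AddCommGroup M] [Module A M]
    [AddCommGroup F] [Module A F] (φ : M →ₗ[A] F) : Prop :=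
  ∀ (E : Type) [AddCommGroup E] [Module A E] [Module.Free A E] [Module.Finite A E]
    (g : M →ₗ[A] E), ∃ h : F →ₗ[A] E, g = h ∘ₗ φ

open Module LinearMap TensorProduct

/-- The natural map `α_{M,P} : M ⊗ P → Hom(M*, P)`, `α(m ⊗ p)(λ) = λ(m) • p`. -/
noncomputable def alphaMap (A : Type) [CommRing A] (M P : Type) [AddCommGroup M]
    [Module A M] [AddCommGroup P] [Module A P] :
    M ⊗[A] P →ₗ[A] (Module.Dual A M →ₗ[A] P) :=
  (dualTensorHom A (Module.Dual A M) P) ∘ₗ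
    (TensorProduct.map (Module.Dual.eval A M) LinearMap.id)

/-- `G_M(P)` is the image of `α_{M,P} : M ⊗ P → Hom(M*, P)`. -/
noncomputable def GFun (A : Type) [CommRing A] (M P : Type) [AddCommGroup M] [Module A M]
    [AddCommGroup P] [Module A P] : Submodule A (Module.Dual A M →ₗ[A] P) :=
  LinearMap.range (alphaMap A M P)

section Aux

variable (A : Type) [CommRing A] {M P : Type} [AddCommGroup M] [Module A M]
  [AddCommGroup P] [Module A P]

lemma alphaMap_apply' (x : M ⊗[A] P) (l : Module.Dual A M) :
    alphaMap A M P x l = TensorProduct.lid A P (LinearMap.rTensor P l x) := by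
  induction x using TensorProduct.induction_on with
  | zero => simp
  | tmul m p => simp [alphaMap]
  | add a b ha hb => simp [ha, hb]

lemma tensor_reconstruct {F : Type} [AddCommGroup F] [Module A F]
    {ι : Type} [Fintype ι] (b : Basis ι A F) (y : F ⊗[A] P) :
    y = ∑ j, b j ⊗ₜ[A] (TensorProduct.lid A P (LinearMap.rTensor P (b.coord j) y)) := by
  induction y using TensorProduct.induction_on with
  | zero => simp
  | tmul f p =>
    calc f ⊗ₜ[A] p = (∑ j, b.repr f j • b j) ⊗ₜ[A] p := by rw [Basis.sum_repr]
      _ = ∑ j, (b.repr f j • b j) ⊗ₜ[A] p := by rw [TensorProduct.sum_tmul]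
      _ = ∑ j, b j ⊗ₜ[A] (TensorProduct.lid A P
            (LinearMap.rTensor P (b.coord j) (f ⊗ₜ[A] p))) := by
          refine Finset.sum_congr rfl fun j _ => ?_
          rw [TensorProduct.smul_tmul]
          simp [Basis.coord_apply]
  | add a c ha hc =>
    conv_lhs => rw [ha, hc]
    rw [← Finset.sum_add_distrib]
    refine Finset.sum_congr rfl fun j _ => ?_
    rw [← TensorProduct.tmul_add]
    simp

end Aux

/-- `φ : M → F` is versal iff for every finitely generated `P`,
`ker (φ ⊗ id_P) = ker (α_{M,P} : M ⊗ P → Hom(M*, P))`. -/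
theorem stmt11 (A : Type) [CommRing A] [IsNoetherianRing A]
    (M F : Type) [AddCommGroup M] [Module A M] [Module.Finite A M]
    [AddCommGroup F] [Module A F] [Module.Free A F] [Module.Finite A F]
    (φ : M →ₗ[A] F) :
    IsVersal A φ ↔
      ∀ (P : Type) [AddCommGroup P] [Module A P] [Module.Finite A P],
        LinearMap.ker (LinearMap.rTensor P φ) = LinearMap.ker (alphaMap A M P) := by
  classical
  constructor
  · -- versal ⇒ kernels agree
    intro hv P _ _ _
    apply le_antisymm
    · intro x hx
      rw [LinearMap.mem_ker] at hx ⊢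
      ext l
      obtain ⟨h, hh⟩ := hv A l
      rw [LinearMap.zero_apply, alphaMap_apply', hh, LinearMap.rTensor_comp,
        LinearMap.comp_apply, hx, map_zero, map_zero]
    · intro x hx
      rw [LinearMap.mem_ker] at hx ⊢
      have b := Module.Free.chooseBasis A F
      rw [tensor_reconstruct A b (LinearMap.rTensor P φ x)]
      refine Finset.sum_eq_zero fun j _ => ?_
      have hz : TensorProduct.lid A P
          (LinearMap.rTensor P (b.coord j) (LinearMap.rTensor P φ x)) = 0 := by
        rw [← LinearMap.comp_apply, ← LinearMap.rTensor_comp, ← alphaMap_apply', hx,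
          LinearMap.zero_apply]
      rw [hz, TensorProduct.tmul_zero]
  · -- kernels agree ⇒ versal
    intro hker
    obtain ⟨n, m, hm⟩ := Module.Finite.exists_fin (R := A) (M := M)
    set ev : Module.Dual A M →ₗ[A] (Fin n → A) :=
      LinearMap.pi (fun i => Module.Dual.eval A M (m i)) with hev
    have hev_inj : Function.Injective ev := by
      intro l1 l2 h12
      refine LinearMap.ext_on hm fun y hy => ?_
      obtain ⟨i, rfl⟩ := hy
      exact congrFun h12 i
    set W : Submodule A (Fin n → A) := LinearMap.range (ev ∘ₗ φ.dualMap) with hW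
    set P : Type := (Fin n → A) ⧸ W with hP
    have hfinP : Module.Finite A P :=
      Module.Finite.of_surjective W.mkQ (Submodule.mkQ_surjective W)
    set x : M ⊗[A] P := ∑ i, m i ⊗ₜ[A] W.mkQ (Pi.single i 1) with hxdef
    have hcomp : ∀ μ : Module.Dual A M,
        TensorProduct.lid A P (LinearMap.rTensor P μ x) = W.mkQ (ev μ) := by
      intro μ
      have h1 : ∀ i, TensorProduct.lid A P
          (LinearMap.rTensor P μ (m i ⊗ₜ[A] W.mkQ (Pi.single i 1)))
          = W.mkQ (Pi.single i (μ (m i))) := by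
        intro i
        rw [LinearMap.rTensor_tmul, TensorProduct.lid_tmul, ← map_smul]
        congr 1
        ext k
        by_cases hk : k = i
        · subst hk; simp
        · simp [Pi.single_apply, hk]
      rw [hxdef, map_sum, map_sum]
      simp_rw [h1]
      rw [← map_sum]
      congr 1
      ext k
      simp [hev, Finset.sum_apply, Pi.single_apply]
    have hker0 : LinearMap.rTensor P φ x = 0 := by
      have b := Module.Free.chooseBasis A F
      rw [tensor_reconstruct A b (LinearMap.rTensor P φ x)]
      refine Finset.sum_eq_zero fun j _ => ?_
      have hz : TensorProduct.lid A P
          (LinearMap.rTensor P (b.coord j) (LinearMap.rTensor P φ x)) = 0 := by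
        rw [← LinearMap.comp_apply, ← LinearMap.rTensor_comp, hcomp]
        have hmem : ev (b.coord j ∘ₗ φ) ∈ W := by
          refine ⟨b.coord j, ?_⟩
          rw [LinearMap.comp_apply]
          congr 1
        exact (Submodule.Quotient.mk_eq_zero W).mpr hmem
      rw [hz, TensorProduct.tmul_zero]
    have halpha : alphaMap A M P x = 0 := by
      have hmem : x ∈ LinearMap.ker (alphaMap A M P) := by
        rw [← hker P]
        exact LinearMap.mem_ker.mpr hker0
      exact LinearMap.mem_ker.mp hmem
    have hfactorA : ∀ l : Module.Dual A M, ∃ h : F →ₗ[A] A, l = h ∘ₗ φ := by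
      intro l
      have h1 : W.mkQ (ev l) = 0 := by
        rw [← hcomp l, ← alphaMap_apply', halpha, LinearMap.zero_apply]
      have h2 : ev l ∈ W := by
        rwa [Submodule.mkQ_apply, Submodule.Quotient.mk_eq_zero] at h1
      obtain ⟨g, hg⟩ := h2
      refine ⟨g, ?_⟩
      have : ev (g ∘ₗ φ) = ev l := by
        rw [← hg, LinearMap.comp_apply]
        congr 1
      exact (hev_inj this).symm
    intro E _ _ _ _ g
    have bE := Module.Free.chooseBasis A E
    choose h hh using fun j => hfactorA (bE.coord j ∘ₗ g)
    refine ⟨∑ j, (h j).smulRight (bE j), ?_⟩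
    ext mm
    rw [LinearMap.comp_apply, LinearMap.sum_apply]
    simp_rw [LinearMap.smulRight_apply]
    have : ∀ j, h j (φ mm) = bE.repr (g mm) j := by
      intro j
      have := congrFun (congrArg (fun f => f.toFun) (hh j)) mm
      simpa [Basis.coord_apply] using this.symm
    simp_rw [this]
    exact (bE.sum_repr (g mm)).symm
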